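/- Consider the relaxed MPCaC problem in ℝ² with f(x) = x₂, one inequality constraint g(x) = x₁² ≤ 0, no equality constraints, and α = 1 (so θ(y) = 1 − y₁ − y₂). For every a > 0, the pair (x̄, ȳ) with x̄ = (0, a) and ȳ = (1, 0) is a PAKKT point of this problem viewed as a standard nonlinear program, but (x̄, ȳ) is not AW-stationary. -/

import Mathlib

open Filter Topology
open scoped Classical

noncomputable section

/-- `ℝⁿ` as a Euclidean space. -/
abbrev E (n : ℕ) : Type := EuclideanSpace ℝ (Fin n)

/-- The constraint function `θ(y) = n − α − eᵀ y` of the relaxed MPCaC problem. -/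
def theta {n : ℕ} (α : ℕ) (y : E n) : ℝ := (n : ℝ) - (α : ℝ) - ∑ i, y i

/-- Feasibility for the relaxed MPCaC problem:
`g(x) ≤ 0, h(x) = 0, θ(y) ≤ 0, xᵢ yᵢ = 0, 0 ≤ yᵢ ≤ 1`. -/
def relFeas {n m p : ℕ} (g : E n → Fin m → ℝ) (h : E n → Fin p → ℝ) (α : ℕ)
    (x y : E n) : Prop :=
  (∀ i, g x i ≤ 0) ∧ (∀ j, h x j = 0) ∧ theta α y ≤ 0 ∧
  (∀ i, x i * y i = 0) ∧ (∀ i, 0 ≤ y i ∧ y i ≤ 1)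

/-- `∇f(x) + Σᵢ λᵍᵢ ∇gᵢ(x) + Σⱼ λʰⱼ ∇hⱼ(x)`. -/
def gradLx {n m p : ℕ} (f : E n → ℝ) (g : E n → Fin m → ℝ) (h : E n → Fin p → ℝ)
    (x : E n) (lg : Fin m → ℝ) (lh : Fin p → ℝ) : E n :=
  gradient f x + ∑ i, lg i • gradient (fun z => g z i) x
    + ∑ j, lh j • gradient (fun z => h z j) x

/-- `i ∈ I_{0+}(x̄,ȳ) ∪ I_{01}(x̄,ȳ)`, i.e. `x̄ᵢ = 0` and (`0 < ȳᵢ < 1` or `ȳᵢ = 1`). -/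
def inI0p01 {n : ℕ} (xb yb : E n) (i : Fin n) : Prop :=
  xb i = 0 ∧ ((0 < yb i ∧ yb i < 1) ∨ yb i = 1)

/-- Admissibility of the index set `I`: `I_{0+} ∪ I_{01} ⊆ I ⊆ I_0`. -/
def idxOK {n : ℕ} (xb yb : E n) (I : Finset (Fin n)) : Prop :=
  (∀ i, inI0p01 xb yb i → i ∈ I) ∧ (∀ i ∈ I, xb i = 0)

/-- Feasibility for the tightened problem `TNLP_I(x̄,ȳ)`:
`g(x) ≤ 0, h(x) = 0, θ(y) ≤ 0, xᵢ = 0 (i ∈ I), −yᵢ ≤ 0 (i ∈ I_{0+} ∪ I_{01}),`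
`−yᵢ = 0 (i ∈ I_{00} ∪ I_{±0}), y − e ≤ 0`. Note `I_{00} ∪ I_{±0} = {i | ȳᵢ = 0}`. -/
def tnlpFeas {n m p : ℕ} (g : E n → Fin m → ℝ) (h : E n → Fin p → ℝ) (α : ℕ)
    (xb yb : E n) (I : Finset (Fin n)) (x y : E n) : Prop :=
  (∀ i, g x i ≤ 0) ∧ (∀ j, h x j = 0) ∧ theta α y ≤ 0 ∧
  (∀ i ∈ I, x i = 0) ∧
  (∀ i, inI0p01 xb yb i → -(y i) ≤ 0) ∧
  (∀ i, yb i = 0 → -(y i) = 0) ∧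
  (∀ i, y i - 1 ≤ 0)

/-- `W_I`-stationarity for the relaxed MPCaC problem (Definition 2.9 of the paper). -/
def WStat {n m p : ℕ} (f : E n → ℝ) (g : E n → Fin m → ℝ) (h : E n → Fin p → ℝ)
    (α : ℕ) (xb yb : E n) (I : Finset (Fin n)) : Prop :=
  ∃ (lg : Fin m → ℝ) (lh : Fin p → ℝ) (lθ : ℝ) (lG : Fin n → ℝ) (lH lH' : Fin n → ℝ),
    (∀ i, 0 ≤ lg i) ∧ 0 ≤ lθ ∧ (∀ i, 0 ≤ lH' i) ∧
    gradLx f g h xb lg lh + ∑ i ∈ I, lG i • EuclideanSpace.single i 1 = 0 ∧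
    (∀ i, -lθ - lH i + lH' i = 0) ∧
    (∑ i, lg i * g xb i) = 0 ∧
    lθ * theta α yb = 0 ∧
    (∀ i, inI0p01 xb yb i → lH i = 0) ∧
    (∑ i, lH' i * (yb i - 1)) = 0

/-- Approximate weak (`AW`) stationarity for the relaxed MPCaC problem
(Definition 3.1 of the paper). -/
def AWStat {n m p : ℕ} (f : E n → ℝ) (g : E n → Fin m → ℝ) (h : E n → Fin p → ℝ)
    (α : ℕ) (xb yb : E n) : Prop :=
  ∃ (x y : ℕ → E n) (lg : ℕ → Fin m → ℝ) (lh : ℕ → Fin p → ℝ) (lθ : ℕ → ℝ)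
    (lG : ℕ → E n) (lH lH' : ℕ → Fin n → ℝ),
    (∀ k i, 0 ≤ lg k i) ∧ (∀ k, 0 ≤ lθ k) ∧ (∀ k i, 0 ≤ lH' k i) ∧
    Tendsto x atTop (𝓝 xb) ∧ Tendsto y atTop (𝓝 yb) ∧
    Tendsto (fun k => gradLx f g h (x k) (lg k) (lh k) + lG k) atTop (𝓝 0) ∧
    Tendsto (fun k i => -(lθ k) - lH k i + lH' k i) atTop (𝓝 (0 : Fin n → ℝ)) ∧
    (∀ i, Tendsto (fun k => min (-(g (x k) i)) (lg k i)) atTop (𝓝 0)) ∧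
    Tendsto (fun k => min (-(theta α (y k))) (lθ k)) atTop (𝓝 0) ∧
    (∀ i, Tendsto (fun k => min |x k i| |lG k i|) atTop (𝓝 0)) ∧
    (∀ i, Tendsto (fun k => min (y k i) |lH k i|) atTop (𝓝 0)) ∧
    (∀ i, Tendsto (fun k => min (1 - y k i) (lH' k i)) atTop (𝓝 0))

/-- Objective of the example: `f(x) = x₂`. -/
def fEx2 : E 2 → ℝ := fun x => x 1

/-- Inequality constraint of the example: `g(x) = x₁² ≤ 0`. -/
def gEx2 : E 2 → Fin 1 → ℝ := fun x _ => (x 0) ^ 2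

/-- No equality constraints. -/
def hEx2 : E 2 → Fin 0 → ℝ := fun _ j => Fin.elim0 j

/-- `x̄ = (0, a)`. -/
def xBar (a : ℝ) : E 2 := WithLp.toLp 2 ![0, a]

/-- `ȳ = (1, 0)`. -/
def yBar : E 2 := WithLp.toLp 2 ![1, 0]

/-!
PAKKT: take `tₖ ↓ 0`, `xᵏ = (tₖ³, a)`, `yᵏ = (1, −tₖ)`. The multiplier `νₖ = (0, 1/tₖ)` of
`xᵢ yᵢ = 0` contributes `νₖ₂ yᵏ₂ = −1` to the `x`-gradient and so cancels `∇f = e₂`; its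
contribution `νₖ₂ xᵏ₂ = a/tₖ` to the `y`-gradient is cancelled by `λᴴₖ₂ = a/tₖ`, which is
harmless since `yᵏ₂ < 0`. The sign of `νₖ₂ xᵏ₂ yᵏ₂ = −a` is wrong, so `ν` must be negligible
against `δₖ`: this is what the multiplier `1/tₖ²` of `x₁² ≤ 0` achieves, while its gradient
contribution `2 xᵏ₁ / tₖ² = 2 tₖ` still vanishes.
AW-stationarity has no such escape: the `x`-gradient only sees the multiplier `λᴳ` of `x`, and as
`x̄₂ = a ≠ 0` approximate complementarity forces `λᴳₖ₂ → 0`, while the second component of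
`∇f + λᵍ ∇g` is constantly `1`.
-/

section Gradient

variable {ι : Type*} [Fintype ι] [DecidableEq ι]

theorem EuclideanSpace.toDual_single_one (i : ι) :
    InnerProductSpace.toDual ℝ (EuclideanSpace ℝ ι) (EuclideanSpace.single i 1) =
      EuclideanSpace.proj i := by
  ext v
  simp [EuclideanSpace.inner_single_left]

theorem EuclideanSpace.hasGradientAt_apply (i : ι) (x : EuclideanSpace ℝ ι) :
    HasGradientAt (fun z : EuclideanSpace ℝ ι => z i) (EuclideanSpace.single i 1) x := by
  rw [hasGradientAt_iff_hasFDerivAt, EuclideanSpace.toDual_single_one]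
  exact (EuclideanSpace.proj (𝕜 := ℝ) i).hasFDerivAt

theorem EuclideanSpace.hasGradientAt_apply_sq (i : ι) (x : EuclideanSpace ℝ ι) :
    HasGradientAt (fun z : EuclideanSpace ℝ ι => z i ^ 2)
      ((2 * x i) • EuclideanSpace.single i 1) x := by
  rw [hasGradientAt_iff_hasFDerivAt, map_smul, EuclideanSpace.toDual_single_one]
  have h := (hasDerivAt_pow 2 (x i)).comp_hasFDerivAt x
    (EuclideanSpace.proj (𝕜 := ℝ) i).hasFDerivAt
  simp only [Nat.cast_ofNat, pow_one, Nat.add_one_sub_one] at h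
  exact h

end Gradient

section Limits

variable {α : Type*} {l : Filter α}

theorem tendsto_toLp_fin_two {u v : α → ℝ} {p q : ℝ}
    (hu : Tendsto u l (𝓝 p)) (hv : Tendsto v l (𝓝 q)) :
    Tendsto (fun k => (WithLp.toLp 2 ![u k, v k] : E 2)) l (𝓝 (WithLp.toLp 2 ![p, q])) :=
  (PiLp.continuous_toLp 2 _).continuousAt.tendsto.comp <|
    tendsto_pi_nhds.2 <| Fin.forall_fin_two.2 ⟨hu, hv⟩

theorem tendsto_of_tendsto_min_of_tendsto_pos {u v : α → ℝ} {c : ℝ} (hc : 0 < c)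
    (hu : Tendsto u l (𝓝 c)) (hmin : Tendsto (fun k => min (u k) (v k)) l (𝓝 0)) :
    Tendsto v l (𝓝 0) := by
  refine hmin.congr' ?_
  filter_upwards [hu.eventually (lt_mem_nhds (half_lt_self hc)),
    hmin.eventually (gt_mem_nhds (half_pos hc))] with k hu hmin
  exact min_eq_right ((min_lt_iff.1 hmin).resolve_left hu.not_gt |>.trans hu).le

theorem tendsto_min_left_of_le {u v : α → ℝ} (hu : Tendsto u l (𝓝 0)) (huv : ∀ k, u k ≤ v k) :
    Tendsto (fun k => min (u k) (v k)) l (𝓝 0) :=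
  hu.congr fun k => (min_eq_left (huv k)).symm

theorem tendsto_min_right_of_le {u v : α → ℝ} (hv : Tendsto v l (𝓝 0)) (hvu : ∀ k, v k ≤ u k) :
    Tendsto (fun k => min (u k) (v k)) l (𝓝 0) :=
  hv.congr fun k => (min_eq_right (hvu k)).symm

theorem tendsto_abs_div_of_le_inv {u t δ : α → ℝ} (ht : ∀ k, 0 < t k)
    (ht0 : Tendsto t l (𝓝 0)) (hu : ∀ k, |u k| ≤ (t k)⁻¹) (hδ : ∀ k, (t k)⁻¹ ^ 2 ≤ δ k) :
    Tendsto (fun k => |u k| / δ k) l (𝓝 0) := by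
  refine squeeze_zero (fun k => ?_) (fun k => ?_) ht0
  · exact div_nonneg (abs_nonneg _) ((sq_nonneg _).trans (hδ k))
  · have htk := ht k
    calc |u k| / δ k ≤ (t k)⁻¹ / (t k)⁻¹ ^ 2 := by gcongr; exacts [hu k, hδ k]
      _ = t k := by field_simp

theorem Filter.Tendsto.elim_of_limsup_pos {u : ℕ → ℝ} (hu : Tendsto u atTop (𝓝 0))
    {P : Prop} (h : 0 < limsup u atTop) : P :=
  (h.ne' hu.limsup_eq).elim

end Limits

theorem AWStat.exists_tendsto_gradLx_apply {n m p : ℕ} {f : E n → ℝ} {g : E n → Fin m → ℝ}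
    {h : E n → Fin p → ℝ} {α : ℕ} {xb yb : E n} (hAW : AWStat f g h α xb yb) {i : Fin n}
    (hi : xb i ≠ 0) :
    ∃ (x : ℕ → E n) (lg : ℕ → Fin m → ℝ) (lh : ℕ → Fin p → ℝ),
      Tendsto (fun k => gradLx f g h (x k) (lg k) (lh k) i) atTop (𝓝 0) := by
  obtain ⟨x, -, lg, lh, -, lG, -, -, -, -, -, hx, -, hgrad, -, -, -, hminG, -, -⟩ := hAW
  have hproj : Continuous fun v : E n => v i := (EuclideanSpace.proj (𝕜 := ℝ) i).continuous
  have hxi : Tendsto (fun k => |x k i|) atTop (𝓝 |xb i|) := ((hproj.tendsto _).comp hx).abs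
  have hGi : Tendsto (fun k => lG k i) atTop (𝓝 0) :=
    (tendsto_zero_iff_abs_tendsto_zero _).2 <|
      tendsto_of_tendsto_min_of_tendsto_pos (abs_pos.2 hi) hxi (hminG i)
  refine ⟨x, lg, lh, ?_⟩
  simpa using ((hproj.tendsto _).comp hgrad).sub hGi

theorem gradLx_fEx2_gEx2 (x : E 2) (lg : Fin 1 → ℝ) (lh : Fin 0 → ℝ) :
    gradLx fEx2 gEx2 hEx2 x lg lh = WithLp.toLp 2 ![2 * lg 0 * x 0, 1] := by
  have hf : gradient fEx2 x = EuclideanSpace.single 1 1 :=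
    (EuclideanSpace.hasGradientAt_apply 1 x).gradient
  have hg : gradient (fun z => gEx2 z 0) x = (2 * x 0) • EuclideanSpace.single 0 1 :=
    (EuclideanSpace.hasGradientAt_apply_sq 0 x).gradient
  rw [gradLx, Fin.sum_univ_one, hf, hg]
  ext i
  fin_cases i <;> simp [mul_assoc, mul_left_comm]

theorem not_AWStat_fEx2_gEx2 {a : ℝ} (ha : a ≠ 0) : ¬ AWStat fEx2 gEx2 hEx2 1 (xBar a) yBar := by
  intro hAW
  obtain ⟨x, lg, lh, hgrad⟩ := hAW.exists_tendsto_gradLx_apply (i := 1) (by simpa [xBar])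
  simp [gradLx_fEx2_gEx2] at hgrad

namespace PAKKTWitness

variable (a : ℝ) (t : ℕ → ℝ)

def x (k : ℕ) : E 2 := WithLp.toLp 2 ![t k ^ 3, a]

def y (k : ℕ) : E 2 := WithLp.toLp 2 ![1, -t k]

def μg (k : ℕ) : Fin 1 → ℝ := fun _ => (t k)⁻¹ ^ 2

def μH (k : ℕ) : Fin 2 → ℝ := ![0, a / t k]

def ν (k : ℕ) : Fin 2 → ℝ := ![0, (t k)⁻¹]

variable {a t}

@[simp] theorem x_apply_zero (k : ℕ) : x a t k 0 = t k ^ 3 := rfl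
@[simp] theorem x_apply_one (k : ℕ) : x a t k 1 = a := rfl
@[simp] theorem y_apply_zero (k : ℕ) : y t k 0 = 1 := rfl
@[simp] theorem y_apply_one (k : ℕ) : y t k 1 = -t k := rfl
@[simp] theorem μg_apply (k : ℕ) (i : Fin 1) : μg t k i = (t k)⁻¹ ^ 2 := rfl
@[simp] theorem μH_apply_zero (k : ℕ) : μH a t k 0 = 0 := rfl
@[simp] theorem μH_apply_one (k : ℕ) : μH a t k 1 = a / t k := rfl
@[simp] theorem ν_apply_zero (k : ℕ) : ν t k 0 = 0 := rfl
@[simp] theorem ν_apply_one (k : ℕ) : ν t k 1 = (t k)⁻¹ := rfl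

theorem theta_y (k : ℕ) : theta 1 (y t k) = t k := by
  rw [theta, Fin.sum_univ_two, y_apply_zero, y_apply_one]
  norm_num

theorem ν_mul_x (k : ℕ) (i : Fin 2) : ν t k i * x a t k i = μH a t k i := by
  fin_cases i <;> simp [div_eq_inv_mul]

theorem μH_nonneg (ha : 0 ≤ a) (ht : ∀ k, 0 < t k) (k : ℕ) (i : Fin 2) : 0 ≤ μH a t k i := by
  fin_cases i
  exacts [le_rfl, div_nonneg ha (ht k).le]

theorem tendsto_x (ht0 : Tendsto t atTop (𝓝 0)) : Tendsto (x a t) atTop (𝓝 (xBar a)) := by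
  have h := tendsto_toLp_fin_two (ht0.pow 3) (tendsto_const_nhds (x := a))
  rwa [zero_pow three_ne_zero] at h

theorem tendsto_y (ht0 : Tendsto t atTop (𝓝 0)) : Tendsto (y t) atTop (𝓝 yBar) := by
  have h := tendsto_toLp_fin_two (tendsto_const_nhds (x := (1 : ℝ))) ht0.neg
  rwa [neg_zero] at h

theorem gradLx_add_sum (ht : ∀ k, 0 < t k) (k : ℕ) :
    gradLx fEx2 gEx2 hEx2 (x a t k) (μg t k) (fun j => Fin.elim0 j)
      + ∑ i, (ν t k i * y t k i) • EuclideanSpace.single i 1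
      = (2 * t k) • EuclideanSpace.single 0 1 := by
  have htk := (ht k).ne'
  rw [gradLx_fEx2_gEx2]
  ext i
  fin_cases i <;> simp [Fin.sum_univ_two, htk]
  field_simp

theorem tendsto_gradLx_add_sum (ht : ∀ k, 0 < t k) (ht0 : Tendsto t atTop (𝓝 0)) :
    Tendsto (fun k => gradLx fEx2 gEx2 hEx2 (x a t k) (μg t k) (fun j => Fin.elim0 j)
      + ∑ i, (ν t k i * y t k i) • EuclideanSpace.single i 1) atTop (𝓝 0) := by
  simp_rw [gradLx_add_sum ht]
  simpa using (ht0.const_mul 2).smul_const (EuclideanSpace.single (0 : Fin 2) (1 : ℝ))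

theorem tendsto_min_neg_gEx2 (ht0 : Tendsto t atTop (𝓝 0)) (i : Fin 1) :
    Tendsto (fun k => min (-gEx2 (x a t k) i) (μg t k i)) atTop (𝓝 0) :=
  tendsto_min_left_of_le (by simpa [gEx2] using ((ht0.pow 3).pow 2).neg) fun _ =>
    (neg_nonpos.2 (sq_nonneg _)).trans (sq_nonneg _)

theorem tendsto_min_neg_theta (ht : ∀ k, 0 < t k) (ht0 : Tendsto t atTop (𝓝 0)) :
    Tendsto (fun k => min (-theta 1 (y t k)) 0) atTop (𝓝 0) :=
  tendsto_min_left_of_le (by simpa [theta_y] using ht0.neg)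
    fun k => by simp [theta_y, (ht k).le]

theorem tendsto_min_y (ha : 0 ≤ a) (ht : ∀ k, 0 < t k) (ht0 : Tendsto t atTop (𝓝 0))
    (i : Fin 2) : Tendsto (fun k => min (y t k i) (μH a t k i)) atTop (𝓝 0) := by
  fin_cases i
  · exact tendsto_min_right_of_le (by simp) (by simp)
  · exact tendsto_min_left_of_le (by simpa using ht0.neg)
      fun k => (neg_nonpos.2 (ht k).le).trans (μH_nonneg ha ht k 1)

theorem tendsto_min_one_sub_y (ht : ∀ k, 0 < t k) (i : Fin 2) :
    Tendsto (fun k => min (1 - y t k i) 0) atTop (𝓝 0) := by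
  refine tendsto_min_right_of_le tendsto_const_nhds fun k => ?_
  fin_cases i <;> simp [add_nonneg zero_le_one (ht k).le]

theorem μg_mul_gEx2_pos (ht : ∀ k, 0 < t k) (k : ℕ) (i : Fin 1) :
    0 < μg t k i * gEx2 (x a t k) i := by
  have htk := ht k
  simp only [gEx2, μg_apply, x_apply_zero]
  positivity

theorem μH_mul_neg_y_pos (ha : 0 < a) (ht : ∀ k, 0 < t k) (k : ℕ) :
    0 < μH a t k 1 * -y t k 1 := by
  simpa using mul_pos (div_pos ha (ht k)) (ht k)

end PAKKTWitness

/-- Example 4.2 of the paper. For the relaxed MPCaC problem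
in `ℝ²` with `f(x) = x₂`, `g(x) = x₁² ≤ 0`, no equality constraints and
`α = 1`, for every `a > 0` the pair `(x̄, ȳ) = ((0,a), (1,0))` is a PAKKT
point of the problem viewed as a standard NLP (inequality constraints
`g(x) ≤ 0`, `θ(y) ≤ 0`, `−y ≤ 0`, `y − e ≤ 0`; equality constraints
`xᵢ yᵢ = 0`), but it is not `AW`-stationary. -/
theorem example_PAKKT_not_AWStat (a : ℝ) (ha : 0 < a) :
    (∃ (x y : ℕ → E 2) (μg : ℕ → Fin 1 → ℝ) (μθ : ℕ → ℝ)
      (μH μH' : ℕ → Fin 2 → ℝ) (νξ : ℕ → Fin 2 → ℝ) (δ : ℕ → ℝ),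
      -- δₖ = ‖(1, λᵏ)‖_∞
      (∀ k, δ k = max 1 (max |μg k 0| (max |μθ k|
        (max (max |μH k 0| |μH k 1|)
          (max (max |μH' k 0| |μH' k 1|) (max |νξ k 0| |νξ k 1|)))))) ∧
      (∀ k i, 0 ≤ μg k i) ∧ (∀ k, 0 ≤ μθ k) ∧ (∀ k i, 0 ≤ μH k i) ∧
      (∀ k i, 0 ≤ μH' k i) ∧
      Tendsto x atTop (𝓝 (xBar a)) ∧ Tendsto y atTop (𝓝 yBar) ∧
      -- ∇ₓ Lagrangian → 0
      Tendsto (fun k => gradLx fEx2 gEx2 hEx2 (x k) (μg k) (fun j => Fin.elim0 j)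
          + ∑ i, (νξ k i * y k i) • EuclideanSpace.single i 1) atTop (𝓝 0) ∧
      -- ∇_y Lagrangian → 0
      Tendsto (fun k i => -(μθ k) - μH k i + μH' k i + νξ k i * x k i)
        atTop (𝓝 (0 : Fin 2 → ℝ)) ∧
      -- approximate complementarity
      (∀ i, Tendsto (fun k => min (-(gEx2 (x k) i)) (μg k i)) atTop (𝓝 0)) ∧
      Tendsto (fun k => min (-(theta 1 (y k))) (μθ k)) atTop (𝓝 0) ∧
      (∀ i, Tendsto (fun k => min (y k i) (μH k i)) atTop (𝓝 0)) ∧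
      (∀ i, Tendsto (fun k => min (1 - y k i) (μH' k i)) atTop (𝓝 0)) ∧
      -- PAKKT positivity conditions
      (∀ i, 0 < Filter.limsup (fun k => μg k i / δ k) atTop →
        ∀ k, 0 < μg k i * gEx2 (x k) i) ∧
      (0 < Filter.limsup (fun k => μθ k / δ k) atTop →
        ∀ k, 0 < μθ k * theta 1 (y k)) ∧
      (∀ i, 0 < Filter.limsup (fun k => μH k i / δ k) atTop →
        ∀ k, 0 < μH k i * (-(y k i))) ∧
      (∀ i, 0 < Filter.limsup (fun k => μH' k i / δ k) atTop →
        ∀ k, 0 < μH' k i * (y k i - 1)) ∧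
      (∀ i, 0 < Filter.limsup (fun k => |νξ k i| / δ k) atTop →
        ∀ k, 0 < νξ k i * (x k i * y k i))) ∧
    ¬ AWStat fEx2 gEx2 hEx2 1 (xBar a) yBar := by
  set t : ℕ → ℝ := fun k => 1 / ((k : ℝ) + 1)
  have ht : ∀ k, 0 < t k := fun k => by positivity
  have ht0 : Tendsto t atTop (𝓝 0) := tendsto_one_div_add_atTop_nhds_zero_nat
  open PAKKTWitness in
  refine ⟨⟨x a t, y t, μg t, fun _ => 0, μH a t, fun _ _ => 0, ν t, _, fun k => rfl,
    fun _ _ => sq_nonneg _, fun _ => le_rfl, μH_nonneg ha.le ht, fun _ _ => le_rfl,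
    tendsto_x ht0, tendsto_y ht0, tendsto_gradLx_add_sum ht ht0,
    tendsto_const_nhds.congr fun k => funext fun i => by simp [ν_mul_x],
    tendsto_min_neg_gEx2 ht0, tendsto_min_neg_theta ht ht0, tendsto_min_y ha.le ht ht0,
    tendsto_min_one_sub_y ht, fun i _ k => μg_mul_gEx2_pos ht k i,
    Tendsto.elim_of_limsup_pos (by simp),
    Fin.forall_fin_two.2 ⟨Tendsto.elim_of_limsup_pos (by simp), fun _ => μH_mul_neg_y_pos ha ht⟩,
    fun _ => Tendsto.elim_of_limsup_pos (by simp),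
    Fin.forall_fin_two.2 ⟨Tendsto.elim_of_limsup_pos (by simp),
      Tendsto.elim_of_limsup_pos <| tendsto_abs_div_of_le_inv ht ht0
        (fun k => by simp [abs_of_pos (ht k)])
        (fun k => le_max_of_le_right (le_max_of_le_left (le_abs_self _)))⟩⟩,
    not_AWStat_fEx2_gEx2 ha.ne'⟩
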